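/- Let p ≥ 3 be an integer, E_∞ = -2 sqrt((p-1)/p), β > 0, E < E_∞, and suppose q_** ∈ (sqrt((p-2)/p), 1) satisfies (1-q_**^2) q_**^(p-2) = 1/(β sqrt(p(p-1))). Then there is a unique q_* ∈ (q_**, 1) with (1-q_*^2) q_*^(p-2) = (-E - sqrt(E^2 - E_∞^2))/(2β(p-1)), and for every q ∈ (q_**, 1): ∂_q F_RS(E,q,β) > 0 if q < q_*, ∂_q F_RS(E,q,β) = 0 if q = q_*, and ∂_q F_RS(E,q,β) < 0 if q > q_*, where F_RS(E,q,β) = -β q^p E + (1/2) log(1-q^2) + (β^2/2)(1 - q^(2p) - p q^(2p-2)(1-q^2)). -/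

import Mathlib

/-!
Write `g(q) = (1 - q²) q^(p-2)`. A direct computation gives
`∂_q F_RS = q / (1 - q²) · (-β²p(p-1) g² - βpE g - 1)`, a concave quadratic in `g` whose roots
`m∓ = (-E ∓ √(E² - E∞²)) / (2β(p-1))` are real because `E < E∞`; their geometric mean
`-E∞ / (2β(p-1)) = 1 / (β√(p(p-1)))` is `g(q_**)`. Since `g' = q^(p-3)((p-2) - pq²)`, `g` decreases
strictly from `g(q_**)` to `g(1) = 0` on `[q_**, 1]`, and `0 < m₋ < g(q_**) < m₊`. Hence `g = m₋` at
exactly one `q_*`, and on `(q_**, 1)`, where `g < m₊`, the sign of `∂_q F_RS` is that of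
`g(q) - m₋ = g(q) - g(q_*)`.
-/

open Real Set

theorem sqrt_sq_sub_sq_mem_Ioo {a b : ℝ} (ha : 0 < a) (hab : a < b) :
    √(b ^ 2 - a ^ 2) ∈ Ioo (b - a) b :=
  ⟨(lt_sqrt (by linarith)).2 (by nlinarith), (sqrt_lt' (by linarith)).2 (by nlinarith)⟩

theorem StrictAntiOn.existsUnique_mem_Ioo_eq {f : ℝ → ℝ} {a b m : ℝ} (hab : a ≤ b)
    (hf : StrictAntiOn f (Icc a b)) (hc : ContinuousOn f (Icc a b)) (hm : m ∈ Ioo (f b) (f a)) :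
    ∃! c, c ∈ Ioo a b ∧ f c = m := by
  obtain ⟨c, hc, hfc⟩ := intermediate_value_Ioo' hab hc hm
  exact ⟨c, ⟨hc, hfc⟩, fun d ⟨hd, hfd⟩ =>
    hf.injOn (Ioo_subset_Icc_self hd) (Ioo_subset_Icc_self hc) (hfd.trans hfc.symm)⟩

namespace PSpin

section Roots

variable {P β E Einf : ℝ}

theorem one_div_mul_sqrt_eq (hP : 1 < P) (hEinf : Einf = -2 * √((P - 1) / P)) :
    1 / (β * √(P * (P - 1))) = -Einf / (2 * β * (P - 1)) := by
  rcases eq_or_ne β 0 with rfl | hβ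
  · simp
  have hsqrt : √((P - 1) / P) * √(P * (P - 1)) = P - 1 := by
    rw [← sqrt_mul (div_nonneg (by linarith) (by linarith)),
      show (P - 1) / P * (P * (P - 1)) = (P - 1) ^ 2 by field_simp, sqrt_sq (by linarith)]
  have hsqrt_pos : 0 < √(P * (P - 1)) := sqrt_pos.2 (by nlinarith)
  have hP1 : P - 1 ≠ 0 := by linarith
  rw [hEinf, div_eq_div_iff (by positivity) (by positivity)]
  linear_combination (-2) * β * hsqrt

theorem lower_root_pos (hP : 1 < P) (hβ : 0 < β) (hEinf : Einf < 0) (hE : E < Einf) :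
    0 < (-E - √(E ^ 2 - Einf ^ 2)) / (2 * β * (P - 1)) := by
  have hs := (sqrt_sq_sub_sq_mem_Ioo (neg_pos.2 hEinf) (neg_lt_neg hE)).2
  rw [neg_sq, neg_sq] at hs
  exact div_pos (by linarith) (by nlinarith)

theorem threshold_mem_Ioo_roots (hP : 1 < P) (hβ : 0 < β) (hEinf : Einf < 0) (hE : E < Einf) :
    -Einf / (2 * β * (P - 1)) ∈
      Ioo ((-E - √(E ^ 2 - Einf ^ 2)) / (2 * β * (P - 1)))
        ((-E + √(E ^ 2 - Einf ^ 2)) / (2 * β * (P - 1))) := by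
  have hden : 0 < 2 * β * (P - 1) := by nlinarith
  have hs := (sqrt_sq_sub_sq_mem_Ioo (neg_pos.2 hEinf) (neg_lt_neg hE)).1
  rw [neg_sq, neg_sq] at hs
  exact ⟨div_lt_div_of_pos_right (by linarith) hden,
    div_lt_div_of_pos_right (by linarith [sqrt_nonneg (E ^ 2 - Einf ^ 2)]) hden⟩

theorem neg_quadratic_eq_mul_roots (hP : 1 < P) (hβ : β ≠ 0)
    (hEinf : Einf = -2 * √((P - 1) / P)) (hE : Einf ^ 2 ≤ E ^ 2) (y : ℝ) :
    -(β ^ 2 * P * (P - 1)) * y ^ 2 - β * P * E * y - 1 =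
      β ^ 2 * P * (P - 1) * ((y - (-E - √(E ^ 2 - Einf ^ 2)) / (2 * β * (P - 1))) *
        ((-E + √(E ^ 2 - Einf ^ 2)) / (2 * β * (P - 1)) - y)) := by
  have hEinf2 : P * Einf ^ 2 = 4 * (P - 1) := by
    rw [hEinf, mul_pow, sq_sqrt (div_nonneg (by linarith) (by linarith))]
    field_simp
    ring
  have hs := sq_sqrt (sub_nonneg.2 hE)
  generalize √(E ^ 2 - Einf ^ 2) = s at hs ⊢
  have hP1 : P - 1 ≠ 0 := by linarith
  field_simp
  linear_combination (-P) * hs + hEinf2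

end Roots

noncomputable def overlapProfile (p : ℕ) (q : ℝ) : ℝ := (1 - q ^ 2) * q ^ (p - 2)

noncomputable def freeEnergyRS (p : ℕ) (β E q : ℝ) : ℝ :=
  -β * q ^ p * E + (1 / 2) * Real.log (1 - q ^ 2) +
    β ^ 2 / 2 * (1 - q ^ (2 * p) - (p : ℝ) * q ^ (2 * p - 2) * (1 - q ^ 2))

variable {p : ℕ}

theorem hasDerivAt_overlapProfile (hp : 3 ≤ p) (q : ℝ) :
    HasDerivAt (overlapProfile p) (q ^ (p - 3) * ((p - 2) - p * q ^ 2)) q := by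
  obtain ⟨n, rfl⟩ : ∃ n, p = n + 3 := ⟨p - 3, by omega⟩
  have h : HasDerivAt (fun x : ℝ => (1 - x ^ 2) * x ^ (n + 1)) _ q :=
    ((hasDerivAt_pow 2 q).const_sub 1).mul (hasDerivAt_pow (n + 1) q)
  refine h.congr_deriv ?_
  simp only [Nat.add_sub_cancel]
  push_cast
  ring

theorem strictAntiOn_overlapProfile (hp : 3 ≤ p) :
    StrictAntiOn (overlapProfile p) (Ici √((p - 2) / p)) := by
  have hp0 : (0 : ℝ) < p := by positivity
  refine strictAntiOn_of_deriv_neg (convex_Ici _)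
    (fun q _ => (hasDerivAt_overlapProfile hp q).continuousAt.continuousWithinAt) ?_
  intro q hq
  rw [interior_Ici] at hq
  have hq0 : 0 < q := (sqrt_nonneg _).trans_lt hq
  have hq2 : (p - 2) / p < q ^ 2 := (sqrt_lt' hq0).1 hq
  rw [div_lt_iff₀ hp0] at hq2
  rw [(hasDerivAt_overlapProfile hp q).deriv]
  exact mul_neg_of_pos_of_neg (pow_pos hq0 _) (by linarith)

theorem hasDerivAt_freeEnergyRS (hp : 3 ≤ p) (β E : ℝ) {q : ℝ} (hq : 1 - q ^ 2 ≠ 0) :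
    HasDerivAt (freeEnergyRS p β E)
      (q / (1 - q ^ 2) * (-(β ^ 2 * p * (p - 1)) * overlapProfile p q ^ 2
        - β * p * E * overlapProfile p q - 1)) q := by
  obtain ⟨n, rfl⟩ : ∃ n, p = n + 3 := ⟨p - 3, by omega⟩
  have hsq := (hasDerivAt_pow 2 q).const_sub 1
  have h : HasDerivAt (fun x : ℝ => -β * x ^ (n + 3) * E + (1 / 2) * Real.log (1 - x ^ 2) +
      β ^ 2 / 2 * (1 - x ^ (2 * n + 6) - ((n + 3 : ℕ) : ℝ) * x ^ (2 * n + 4) * (1 - x ^ 2))) _ q :=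
    ((((hasDerivAt_pow (n + 3) q).const_mul (-β)).mul_const E).add
      ((hsq.log hq).const_mul (1 / 2))).add
      ((((hasDerivAt_pow (2 * n + 6) q).const_sub 1).sub
        (((hasDerivAt_pow (2 * n + 4) q).const_mul ((n + 3 : ℕ) : ℝ)).mul hsq)).const_mul
          (β ^ 2 / 2))
  refine h.congr_deriv ?_
  simp only [overlapProfile]
  field_simp
  push_cast
  ring

theorem deriv_freeEnergyRS_eq_mul_sub_root {β E Einf q : ℝ} (hp : 3 ≤ p) (hβ : 0 < β)
    (hEinf : Einf = -2 * √((p - 1) / p)) (hE : Einf ^ 2 ≤ E ^ 2) (hq : q ∈ Ioo 0 1)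
    (hg : overlapProfile p q < (-E + √(E ^ 2 - Einf ^ 2)) / (2 * β * (p - 1))) :
    ∃ C > 0, deriv (freeEnergyRS p β E) q =
      C * (overlapProfile p q - (-E - √(E ^ 2 - Einf ^ 2)) / (2 * β * (p - 1))) := by
  have hp1 : (1 : ℝ) < p := by exact_mod_cast (by omega : 1 < p)
  have hq2 : 0 < 1 - q ^ 2 := by nlinarith [hq.1, hq.2]
  rw [(hasDerivAt_freeEnergyRS hp β E hq2.ne').deriv,
    neg_quadratic_eq_mul_roots hp1 hβ.ne' hEinf hE]
  refine ⟨q / (1 - q ^ 2) * (β ^ 2 * p * (p - 1)) *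
    ((-E + √(E ^ 2 - Einf ^ 2)) / (2 * β * (p - 1)) - overlapProfile p q), ?_, by ring⟩
  have : (0 : ℝ) < p - 1 := by linarith
  have := sub_pos.2 hg
  have := hq.1
  positivity

end PSpin

open PSpin

/-- For `E < E∞` and `q_** ∈ (sqrt((p-2)/p),1)` with `(1-q_**²)q_**^(p-2) = 1/(β sqrt(p(p-1)))`,
there is a unique `q_* ∈ (q_**,1)` solving `(1-q_*²)q_*^(p-2) = (-E - sqrt(E²-E∞²))/(2β(p-1))`,
and on `(q_**,1)` the `q`-derivative of `F_RS(E,·,β)` is positive before `q_*`, zero at `q_*`,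
and negative after `q_*`. -/
theorem stmt_16 (p : ℕ) (hp : 3 ≤ p) (β : ℝ) (hβ : 0 < β)
    (Einf : ℝ) (hEinf : Einf = -2 * Real.sqrt (((p : ℝ) - 1) / p))
    (E : ℝ) (hE : E < Einf)
    (qss : ℝ) (hqss : qss ∈ Set.Ioo (Real.sqrt (((p : ℝ) - 2) / p)) 1)
    (hfpss : (1 - qss ^ 2) * qss ^ (p - 2) = 1 / (β * Real.sqrt ((p : ℝ) * ((p : ℝ) - 1)))) :
    (∃! qs : ℝ, qs ∈ Set.Ioo qss 1 ∧
      (1 - qs ^ 2) * qs ^ (p - 2) =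
        (-E - Real.sqrt (E ^ 2 - Einf ^ 2)) / (2 * β * ((p : ℝ) - 1))) ∧
    (∀ qs : ℝ, qs ∈ Set.Ioo qss 1 →
      (1 - qs ^ 2) * qs ^ (p - 2) =
        (-E - Real.sqrt (E ^ 2 - Einf ^ 2)) / (2 * β * ((p : ℝ) - 1)) →
      ∀ q ∈ Set.Ioo qss 1,
        (q < qs → 0 < deriv (fun q : ℝ => -β * q ^ p * E + (1 / 2) * Real.log (1 - q ^ 2) +
          β ^ 2 / 2 * (1 - q ^ (2 * p) - (p : ℝ) * q ^ (2 * p - 2) * (1 - q ^ 2))) q) ∧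
        (q = qs → deriv (fun q : ℝ => -β * q ^ p * E + (1 / 2) * Real.log (1 - q ^ 2) +
          β ^ 2 / 2 * (1 - q ^ (2 * p) - (p : ℝ) * q ^ (2 * p - 2) * (1 - q ^ 2))) q = 0) ∧
        (qs < q → deriv (fun q : ℝ => -β * q ^ p * E + (1 / 2) * Real.log (1 - q ^ 2) +
          β ^ 2 / 2 * (1 - q ^ (2 * p) - (p : ℝ) * q ^ (2 * p - 2) * (1 - q ^ 2))) q < 0)) := by
  have hp1 : (1 : ℝ) < p := by exact_mod_cast (by omega : 1 < p)
  have hEinf_neg : Einf < 0 := by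
    rw [hEinf]
    nlinarith [sqrt_pos.2 (div_pos (by linarith : (0 : ℝ) < p - 1) (by linarith : (0 : ℝ) < p))]
  have hqss0 : 0 < qss := (sqrt_nonneg _).trans_lt hqss.1
  have hanti : StrictAntiOn (overlapProfile p) (Icc qss 1) :=
    (strictAntiOn_overlapProfile hp).mono fun q hq => hqss.1.le.trans hq.1
  have hgqss : overlapProfile p qss = -Einf / (2 * β * (p - 1)) :=
    hfpss.trans (one_div_mul_sqrt_eq hp1 hEinf)
  have hbracket := threshold_mem_Ioo_roots hp1 hβ hEinf_neg hE
  rw [← hgqss] at hbracket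
  have hg1 : overlapProfile p 1 < (-E - √(E ^ 2 - Einf ^ 2)) / (2 * β * (p - 1)) := by
    simpa [overlapProfile] using lower_root_pos hp1 hβ hEinf_neg hE
  refine ⟨hanti.existsUnique_mem_Ioo_eq hqss.2.le
    (fun q _ => (hasDerivAt_overlapProfile hp q).continuousAt.continuousWithinAt)
    ⟨hg1, hbracket.1⟩, fun qs hqs hgqs q hq => ?_⟩
  obtain ⟨C, hC, hderiv⟩ := deriv_freeEnergyRS_eq_mul_sub_root hp hβ hEinf (by nlinarith)
    ⟨hqss0.trans hq.1, hq.2⟩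
    ((hanti (left_mem_Icc.2 hqss.2.le) (Ioo_subset_Icc_self hq) hq.1).trans hbracket.2)
  replace hq := Ioo_subset_Icc_self hq
  replace hqs := Ioo_subset_Icc_self hqs
  change (q < qs → 0 < deriv (freeEnergyRS p β E) q) ∧
    (q = qs → deriv (freeEnergyRS p β E) q = 0) ∧ (qs < q → deriv (freeEnergyRS p β E) q < 0)
  change overlapProfile p qs = _ at hgqs
  rw [hderiv, ← hgqs]
  exact ⟨fun h => mul_pos hC (sub_pos.2 (hanti hq hqs h)), fun h => by rw [h, sub_self, mul_zero],
    fun h => mul_neg_of_pos_of_neg hC (sub_neg.2 (hanti hqs hq h))⟩
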